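/- Let ρ, P, M be d×d complex matrices where ρ is Hermitian positive semidefinite with Tr ρ = 1, P is a Hermitian projection (P² = P = P*), M is Hermitian with 0 ≤ M ≤ I, and let t ∈ [0,1]. Then |Tr(ρM) − Tr(ρ·P M P) − t·Tr(ρ(I−P))| ≤ 3·‖(I−P)ρ‖₁, where ‖A‖₁ = Tr √(A*A) is the trace norm. -/

import Mathlib

/-!
Put `Q = 1 - P`. Since `ρ - PρP = Qρ + PρQ`, the quantity to bound is
`Tr(Qρ M) + conj Tr(Qρ PM) - t Tr(Qρ 1)`, a combination of traces `Tr(Qρ C)` against the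
contractions `C = M, PM, 1`. For a contraction `C`, `|Tr(A C)| ≤ ‖A‖₁`: diagonalising
`AᴴA = V diag(λ) Vᴴ`, we get `Tr(A C) = Tr((VᴴC)(AV))`, the `i`-th column of `AV` has norm `√λᵢ`,
the `i`-th row of `VᴴC` has norm at most `1`, and Cauchy–Schwarz gives `∑ √λᵢ = ‖A‖₁`.
-/

open Matrix
open scoped ComplexOrder Classical

/-- The (Hermitian positive semidefinite) square root of a positive semidefinite
complex matrix; junk value `0` if the matrix is not positive semidefinite. -/
noncomputable def msqrt {d : ℕ} (A : Matrix (Fin d) (Fin d) ℂ) :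
    Matrix (Fin d) (Fin d) ℂ :=
  if h : A.PosSemidef then
    (h.1.eigenvectorUnitary : Matrix (Fin d) (Fin d) ℂ) *
      diagonal (((↑) : ℝ → ℂ) ∘ (Real.sqrt ·) ∘ h.1.eigenvalues) *
      (star h.1.eigenvectorUnitary : Matrix (Fin d) (Fin d) ℂ)
  else 0

/-- The trace norm `‖A‖₁ = Tr √(A* A)` of a complex matrix. -/
noncomputable def traceNorm {d : ℕ} (A : Matrix (Fin d) (Fin d) ℂ) : ℝ :=
  ((msqrt (Aᴴ * A)).trace).re

/-- `C Cᴴ ≤ 1`, i.e. `C` has operator norm at most `1`. -/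
def IsContraction {n R : Type*} [Fintype n] [DecidableEq n] [Ring R] [PartialOrder R]
    [StarRing R] (C : Matrix n n R) : Prop :=
  (1 - C * Cᴴ).PosSemidef

namespace IsContraction

variable {n R : Type*} [Fintype n] [DecidableEq n] [CommRing R] [PartialOrder R] [StarRing R]

lemma one : IsContraction (1 : Matrix n n R) := by
  simpa [IsContraction] using PosSemidef.zero

lemma of_posSemidef_of_le_one [StarOrderedRing R] {M : Matrix n n R} (hM : M.PosSemidef)
    (hM1 : (1 - M).PosSemidef) : IsContraction M := by
  have hMh : Mᴴ = M := hM.isHermitian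
  have h1Mh : (1 - M)ᴴ = 1 - M := hM1.isHermitian
  have key : 1 - M * Mᴴ = (1 - M) + (1 - M)ᴴ * M * (1 - M) + Mᴴ * (1 - M) * M := by
    rw [hMh, h1Mh]; noncomm_ring
  rw [IsContraction, key]
  exact (hM1.add (hM.conjTranspose_mul_mul_same _)).add (hM1.conjTranspose_mul_mul_same _)

lemma projection_mul [StarOrderedRing R] {C P : Matrix n n R} (hC : IsContraction C)
    (hPproj : P * P = P) (hPherm : Pᴴ = P) : IsContraction (P * C) := by
  have hQ : (1 - P).PosSemidef := by
    have h : (1 - P)ᴴ * (1 - P) = 1 - P := by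
      rw [conjTranspose_sub, conjTranspose_one, hPherm, sub_mul, mul_sub, mul_sub, hPproj]
      noncomm_ring
    have := posSemidef_conjTranspose_mul_self (1 - P)
    rwa [h] at this
  have key : 1 - P * C * (P * C)ᴴ = (1 - P) + Pᴴ * (1 - C * Cᴴ) * P := by
    rw [conjTranspose_mul, hPherm, mul_sub, sub_mul, mul_one, hPproj]; noncomm_ring
  rw [IsContraction, key]
  exact hQ.add (hC.conjTranspose_mul_mul_same P)

lemma unitary_mul {C V : Matrix n n R} (hC : IsContraction C) (hV : Vᴴ * V = 1) :
    IsContraction (Vᴴ * C) := by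
  have key : 1 - Vᴴ * C * (Vᴴ * C)ᴴ = Vᴴ * (1 - C * Cᴴ) * V := by
    rw [conjTranspose_mul, conjTranspose_conjTranspose, mul_sub, sub_mul, mul_one, hV]
    simp only [Matrix.mul_assoc]
  rw [IsContraction, key]
  exact hC.conjTranspose_mul_mul_same V

end IsContraction

section RowColumn

variable {m n : Type*}

lemma sum_sq_norm_row_le_one [Fintype n] [DecidableEq n] {C : Matrix n n ℂ}
    (hC : IsContraction C) (i : n) : ∑ j, ‖C i j‖ ^ 2 ≤ 1 := by
  have h : ((1 - C * Cᴴ) i i) = 1 - ((∑ j, ‖C i j‖ ^ 2 : ℝ) : ℂ) := by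
    simp [Matrix.mul_apply, Complex.mul_conj, Complex.normSq_eq_norm_sq]
  have := hC.diag_nonneg (i := i)
  rw [h, Complex.nonneg_iff, Complex.sub_re, Complex.one_re, Complex.ofReal_re] at this
  linarith [this.1]

lemma sum_sq_norm_col_eq [Fintype m] (B : Matrix m n ℂ) (i : n) :
    ((∑ j, ‖B j i‖ ^ 2 : ℝ) : ℂ) = (Bᴴ * B) i i := by
  simp [Matrix.mul_apply, Complex.mul_conj, Complex.normSq_eq_norm_sq, mul_comm]

lemma norm_trace_mul_le [Fintype n] [Fintype m] (K : Matrix n m ℂ) (B : Matrix m n ℂ) :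
    ‖(K * B).trace‖ ≤ ∑ i, √(∑ j, ‖K i j‖ ^ 2) * √(∑ j, ‖B j i‖ ^ 2) := by
  calc ‖(K * B).trace‖ ≤ ∑ i, ∑ j, ‖K i j‖ * ‖B j i‖ := by
        refine (norm_sum_le _ _).trans (Finset.sum_le_sum fun i _ => ?_)
        rw [diag_apply, mul_apply]
        exact (norm_sum_le _ _).trans_eq (by simp only [norm_mul])
    _ ≤ _ := Finset.sum_le_sum fun i _ => Real.sum_mul_le_sqrt_mul_sqrt _ _ _

end RowColumn

lemma traceNorm_eq_sum_sqrt_eigenvalues {d : ℕ} (A : Matrix (Fin d) (Fin d) ℂ) :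
    traceNorm A = ∑ i, √((posSemidef_conjTranspose_mul_self A).isHermitian.eigenvalues i) := by
  set hA := posSemidef_conjTranspose_mul_self A
  set U : Matrix (Fin d) (Fin d) ℂ := ↑hA.isHermitian.eigenvectorUnitary
  have hU : star U * U = 1 := Unitary.coe_star_mul_self _
  rw [traceNorm, msqrt, dif_pos hA, trace_mul_cycle, hU, Matrix.one_mul, trace_diagonal,
    Complex.re_sum]
  simp

theorem norm_trace_mul_le_traceNorm {d : ℕ} (A C : Matrix (Fin d) (Fin d) ℂ)
    (hC : IsContraction C) : ‖(A * C).trace‖ ≤ traceNorm A := by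
  set hA := (posSemidef_conjTranspose_mul_self A).isHermitian
  set V : Matrix (Fin d) (Fin d) ℂ := ↑hA.eigenvectorUnitary
  have hV : Vᴴ * V = 1 := Unitary.coe_star_mul_self _
  have hV' : V * Vᴴ = 1 := Unitary.coe_mul_star_self _
  have htrace : (A * C).trace = ((Vᴴ * C) * (A * V)).trace := by
    rw [trace_mul_comm (Vᴴ * C), Matrix.mul_assoc, ← Matrix.mul_assoc V, hV', Matrix.one_mul]
  have hdiag : (A * V)ᴴ * (A * V) = diagonal (RCLike.ofReal ∘ hA.eigenvalues) := by
    rw [← hA.conjStarAlgAut_star_eigenvectorUnitary, Unitary.conjStarAlgAut_star_apply,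
      conjTranspose_mul]
    simp only [Matrix.mul_assoc, star_eq_conjTranspose]
    rfl
  have hcol (i : Fin d) : √(∑ j, ‖(A * V) j i‖ ^ 2) = √(hA.eigenvalues i) := by
    have h := sum_sq_norm_col_eq (A * V) i
    rw [hdiag, diagonal_apply_eq, Function.comp_apply] at h
    exact congrArg _ (Complex.ofReal_injective h)
  have hrow (i : Fin d) : √(∑ j, ‖(Vᴴ * C) i j‖ ^ 2) ≤ 1 :=
    Real.sqrt_le_one.mpr (sum_sq_norm_row_le_one (hC.unitary_mul hV) i)
  rw [htrace, traceNorm_eq_sum_sqrt_eigenvalues]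
  refine (norm_trace_mul_le _ _).trans (Finset.sum_le_sum fun i _ => ?_)
  rw [hcol]
  exact mul_le_of_le_one_left (Real.sqrt_nonneg _) (hrow i)

lemma trace_mul_sub_trace_mul_compress {n : Type*} [Fintype n] [DecidableEq n]
    {ρ P M : Matrix n n ℂ} (hρ : ρ.IsHermitian) (hP : Pᴴ = P) (hM : M.IsHermitian) :
    (ρ * M).trace - (ρ * (P * M * P)).trace
      = ((1 - P) * ρ * M).trace + star ((1 - P) * ρ * (P * M)).trace := by
  have hcompress : (ρ * (P * M * P)).trace = (P * ρ * P * M).trace := by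
    rw [show ρ * (P * M * P) = ρ * P * M * P by simp only [Matrix.mul_assoc], trace_mul_comm]
    simp only [Matrix.mul_assoc]
  have hadjoint : star ((1 - P) * ρ * (P * M)).trace = (P * ρ * (1 - P) * M).trace := by
    rw [← trace_conjTranspose]
    simp only [conjTranspose_mul, conjTranspose_sub, conjTranspose_one, hP, hρ.eq, hM.eq,
      Matrix.mul_assoc]
    rw [trace_mul_comm M]
    simp only [Matrix.mul_assoc]
  rw [hcompress, hadjoint, ← trace_sub, ← trace_add]
  congr 1
  noncomm_ring

theorem stmt17_general {d : ℕ} (ρ P M : Matrix (Fin d) (Fin d) ℂ)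
    (hρ : ρ.PosSemidef)
    (hPproj : P * P = P) (hPherm : Pᴴ = P)
    (hM : M.PosSemidef) (hM1 : (1 - M).PosSemidef)
    (t : ℝ) (ht0 : 0 ≤ t) (ht1 : t ≤ 1) :
    ‖(ρ * M).trace - (ρ * (P * M * P)).trace - (t : ℂ) * (ρ * (1 - P)).trace‖
      ≤ 3 * traceNorm ((1 - P) * ρ) := by
  have hMc : IsContraction M := .of_posSemidef_of_le_one hM hM1
  have hcorner : (ρ * (1 - P)).trace = ((1 - P) * ρ * 1).trace := by
    rw [Matrix.mul_one, trace_mul_comm]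
  have h₁ := norm_trace_mul_le_traceNorm ((1 - P) * ρ) M hMc
  have h₂ := norm_trace_mul_le_traceNorm ((1 - P) * ρ) (P * M) (hMc.projection_mul hPproj hPherm)
  have h₃ := norm_trace_mul_le_traceNorm ((1 - P) * ρ) 1 IsContraction.one
  have htn : 0 ≤ traceNorm ((1 - P) * ρ) := (norm_nonneg _).trans h₃
  rw [trace_mul_sub_trace_mul_compress hρ.isHermitian hPherm hM.isHermitian, hcorner]
  refine (norm_sub_le _ _).trans ?_
  rw [norm_mul, Complex.norm_of_nonneg ht0]
  refine (add_le_add (norm_add_le _ _) le_rfl).trans ?_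
  rw [norm_star]
  nlinarith [mul_le_mul_of_nonneg_left h₃ ht0, mul_le_of_le_one_left htn ht1]

/-- The approximation estimate (app) from the proof of Proposition 2: for a
density matrix `ρ`, a Hermitian projection `P`, a Hermitian `M` with
`0 ≤ M ≤ I` and `t ∈ [0,1]`,
`|Tr(ρ M) − Tr(ρ P M P) − t Tr(ρ (I − P))| ≤ 3 ‖(I − P) ρ‖₁`. -/
theorem stmt17 {d : ℕ} (ρ P M : Matrix (Fin d) (Fin d) ℂ)
    (hρ : ρ.PosSemidef) (hρtr : ρ.trace = 1)
    (hPproj : P * P = P) (hPherm : Pᴴ = P)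
    (hM : M.PosSemidef) (hM1 : (1 - M).PosSemidef)
    (t : ℝ) (ht0 : 0 ≤ t) (ht1 : t ≤ 1) :
    ‖(ρ * M).trace - (ρ * (P * M * P)).trace - (t : ℂ) * (ρ * (1 - P)).trace‖
      ≤ 3 * traceNorm ((1 - P) * ρ) :=
  stmt17_general ρ P M hρ hPproj hPherm hM hM1 t ht0 ht1
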